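/- Suppose a point p on a surface lies on four distinct (-1)-classes E_1, E_2, E_3, E_4 such that no two of them sum to -K (so ⟨E_i, E_j⟩ = 1 for i ≠ j, using that classes meeting at a point have positive intersection and that intersection 2 forces sum -K). Then E_1 + E_2 + E_3 + E_4 = -2K in the Picard lattice. -/
import Mathlib


/-- The intersection form of signature (1,7) on the Picard lattice `ℤ⁸`
of a degree-2 weak Del Pezzo surface. -/
def dpForm (x y : Fin 8 → ℤ) : ℤ :=
  x 0 * y 0 - ∑ i : Fin 7, x i.succ * y i.succ

/-- The canonical class `K = (-3, 1, 1, 1, 1, 1, 1, 1)`. -/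
def dpK : Fin 8 → ℤ := ![-3, 1, 1, 1, 1, 1, 1, 1]

/-- The basis classes `l i` (`l 0` the line class, `l i` the exceptional classes). -/
def l (i : Fin 8) : Fin 8 → ℤ := Pi.single i 1

/-- A `(-1)`-class: `D² = -1`, `⟨D, K⟩ = -1`, nonnegative leading coefficient. -/
def IsMinusOneClass (D : Fin 8 → ℤ) : Prop :=
  dpForm D D = -1 ∧ dpForm D dpK = -1 ∧ 0 ≤ D 0

/-- A `(-2)`-class: `F² = -2`, `⟨F, K⟩ = 0`, nonnegative leading coefficient. -/
def IsMinusTwoClass (F : Fin 8 → ℤ) : Prop :=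
  dpForm F F = -2 ∧ dpForm F dpK = 0 ∧ 0 ≤ F 0

lemma dpForm_comm (x y : Fin 8 → ℤ) : dpForm x y = dpForm y x := by
  simp [dpForm, mul_comm]

lemma dpForm_add_left (x y z : Fin 8 → ℤ) :
    dpForm (x + y) z = dpForm x z + dpForm y z := by
  simp [dpForm, add_mul, Finset.sum_add_distrib]; ring

lemma dpForm_smul_left (c : ℤ) (x z : Fin 8 → ℤ) :
    dpForm (c • x) z = c * dpForm x z := by
  simp only [dpForm, Pi.smul_apply, smul_eq_mul, Finset.mul_sum]; ring_nf
  simp [Finset.mul_sum, mul_comm, mul_left_comm]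

lemma dpForm_sum_left (f : Fin 4 → Fin 8 → ℤ) (z : Fin 8 → ℤ) :
    dpForm (∑ i, f i) z = ∑ i, dpForm (f i) z := by
  simp [Fin.sum_univ_four, dpForm_add_left]

lemma dpKK : dpForm dpK dpK = 2 := by
  simp [dpForm, dpK, Fin.sum_univ_succ]

lemma dpForm_expand (x y : Fin 8 → ℤ) :
    dpForm x y = x 0 * y 0 - (x 1 * y 1 + x 2 * y 2 + x 3 * y 3
      + x 4 * y 4 + x 5 * y 5 + x 6 * y 6 + x 7 * y 7) := by
  simp only [dpForm, Fin.sum_univ_seven]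
  norm_num [Fin.succ]
  rfl

/-- If `E₁, E₂, E₃, E₄` are four distinct `(-1)`-classes with `⟨Eᵢ, Eⱼ⟩ = 1` for all
`i ≠ j`, then `E₁ + E₂ + E₃ + E₄ = -2K`. -/
theorem generalized_Eckardt_sum (E : Fin 4 → (Fin 8 → ℤ))
    (hinj : Function.Injective E)
    (hE : ∀ i, IsMinusOneClass (E i))
    (hpair : ∀ i j, i ≠ j → dpForm (E i) (E j) = 1) :
    ∑ i : Fin 4, E i = (-2 : ℤ) • dpK := by
  set v : Fin 8 → ℤ := (∑ i, E i) + (2 : ℤ) • dpK with hv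
  have hdiag : ∀ i, dpForm (E i) (E i) = -1 := fun i => (hE i).1
  have hK : ∀ i, dpForm (E i) dpK = -1 := fun i => (hE i).2.1
  have hsum : ∀ i, ∑ j, dpForm (E j) (E i) = 2 := by
    intro i
    have hterm : ∀ j, dpForm (E j) (E i) = (if j = i then (-2 : ℤ) else 0) + 1 := by
      intro j
      by_cases h : j = i
      · subst h; simp [hdiag]
      · simp [h, hpair j i h]
    rw [Finset.sum_congr rfl (fun j _ => hterm j), Finset.sum_add_distrib]
    simp
  have h1 : dpForm v dpK = 0 := by
    rw [hv, dpForm_add_left, dpForm_sum_left, dpForm_smul_left, dpKK,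
      Fin.sum_univ_four, hK 0, hK 1, hK 2, hK 3]
    ring
  have hEv : ∀ i, dpForm (E i) v = 0 := by
    intro i
    rw [dpForm_comm, hv, dpForm_add_left, dpForm_sum_left, dpForm_smul_left, hsum i]
    have hc : dpForm dpK (E i) = -1 := by rw [dpForm_comm]; exact hK i
    rw [hc]; ring
  have h2 : dpForm v v = 0 := by
    have hKv : dpForm dpK v = 0 := by rw [dpForm_comm]; exact h1
    conv_lhs => rw [hv]
    rw [dpForm_add_left, dpForm_sum_left, dpForm_smul_left,
      Fin.sum_univ_four, hEv 0, hEv 1, hEv 2, hEv 3, hKv]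
    ring
  have h1' : v 0 * (-3) - (v 1 + v 2 + v 3 + v 4 + v 5 + v 6 + v 7) = 0 := by
    have := h1
    rw [dpForm_expand, show dpK 0 = -3 from rfl, show dpK 1 = 1 from rfl,
      show dpK 2 = 1 from rfl, show dpK 3 = 1 from rfl, show dpK 4 = 1 from rfl,
      show dpK 5 = 1 from rfl, show dpK 6 = 1 from rfl, show dpK 7 = 1 from rfl] at this
    linarith
  have h2' : v 0 * v 0 - (v 1 * v 1 + v 2 * v 2 + v 3 * v 3 + v 4 * v 4
      + v 5 * v 5 + v 6 * v 6 + v 7 * v 7) = 0 := by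
    have := h2
    rwa [dpForm_expand] at this
  have h0 : v 0 = 0 := by
    nlinarith [sq_nonneg (3 * v 1 + v 0), sq_nonneg (3 * v 2 + v 0),
      sq_nonneg (3 * v 3 + v 0), sq_nonneg (3 * v 4 + v 0), sq_nonneg (3 * v 5 + v 0),
      sq_nonneg (3 * v 6 + v 0), sq_nonneg (3 * v 7 + v 0), sq_nonneg (v 0)]
  have hsq : ∀ j : Fin 8, v j * v j = 0 := by
    have hmn : ∀ j : Fin 8, 0 ≤ v j * v j := fun j => mul_self_nonneg (v j)
    have hz : v 0 * v 0 = 0 := by rw [h0]; ring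
    intro j
    fin_cases j
    · show v 0 * v 0 = 0; rw [h0]; ring
    · show v 1 * v 1 = 0; linarith [hmn 1, hmn 2, hmn 3, hmn 4, hmn 5, hmn 6, hmn 7, h2', hz]
    · show v 2 * v 2 = 0; linarith [hmn 1, hmn 2, hmn 3, hmn 4, hmn 5, hmn 6, hmn 7, h2', hz]
    · show v 3 * v 3 = 0; linarith [hmn 1, hmn 2, hmn 3, hmn 4, hmn 5, hmn 6, hmn 7, h2', hz]
    · show v 4 * v 4 = 0; linarith [hmn 1, hmn 2, hmn 3, hmn 4, hmn 5, hmn 6, hmn 7, h2', hz]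
    · show v 5 * v 5 = 0; linarith [hmn 1, hmn 2, hmn 3, hmn 4, hmn 5, hmn 6, hmn 7, h2', hz]
    · show v 6 * v 6 = 0; linarith [hmn 1, hmn 2, hmn 3, hmn 4, hmn 5, hmn 6, hmn 7, h2', hz]
    · show v 7 * v 7 = 0; linarith [hmn 1, hmn 2, hmn 3, hmn 4, hmn 5, hmn 6, hmn 7, h2', hz]
  have hv0 : v = 0 := funext fun j => mul_self_eq_zero.mp (hsq j)
  have hsumK : (∑ i, E i) + (2 : ℤ) • dpK = 0 := hv0
  have hfinal := eq_neg_of_add_eq_zero_left hsumK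
  rw [hfinal, ← neg_smul]
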